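/- Let X₁, …, X_{2d} ⊆ S^{d-1} with pos X_i = ℝ^d for every i, and suppose no partial transversal T = {x_i ∈ X_i : i ∈ I} with I ⊊ [2d] satisfies pos T = ℝ^d. Then for every i ∈ [2d] and every x ∈ X_i, the set {j ∈ [2d] : j ≠ i and −x ∈ X_j} has at least d elements. -/

import Mathlib

open scoped BigOperators

/-- The positive (conic) hull of a set: all finite nonnegative linear combinations. -/
def posHull {d : ℕ} (A : Set (EuclideanSpace ℝ (Fin d))) : Set (EuclideanSpace ℝ (Fin d)) :=
  {x | ∃ (n : ℕ) (c : Fin n → ℝ) (f : Fin n → EuclideanSpace ℝ (Fin d)),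
    (∀ i, 0 ≤ c i) ∧ (∀ i, f i ∈ A) ∧ x = ∑ i, c i • f i}

/-!
Fix `x ∈ X i` and suppose fewer than `d` other colors contain `-x`. The `≥ d` remaining colors
positively span, so by the conic colorful Carathéodory theorem `-x` is a positive combination of
a linearly independent rainbow family `w_j ∈ X_j`, with at least two members since `-x` itself is
not available. So `x` and the `w_j` form a partial transversal with `k + 1` colors whose cone
contains the `k`-dimensional span `L` of the `w_j`. While `L ≠ ℝ^d`, pick an unused color with a
point `y ∉ L` and apply colorful Carathéodory in `Lᗮ` to `-y`, using the other unused colors: this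
adds `#S + 1` colors and at least `#S ≥ 1` dimensions to `L`, so at most `2 dim L - 1` colors are
ever used. Once `L = ℝ^d`, the transversal positively spans but misses a color.
-/

open Module Submodule PointedCone
open scoped RealInnerProductSpace

section LinearAlgebra

variable {ι K V W : Type*} [DivisionRing K] [AddCommGroup V] [Module K V] [AddCommGroup W]
  [Module K W]

theorem finrank_add_card_le_finrank_sup [FiniteDimensional K V] (f : V →ₗ[K] W)
    {L : Submodule K V} (hL : L ≤ LinearMap.ker f) {w : ι → V} {S : Finset ι}
    (hS : LinearIndepOn K (f ∘ w) S) :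
    finrank K L + S.card ≤ finrank K ↥(L ⊔ span K (w '' S)) := by
  set M := L ⊔ span K (w '' S)
  have hrange : S.card ≤ finrank K (LinearMap.range (f.domRestrict M)) := by
    have hspan : span K ((f ∘ w) '' S) ≤ LinearMap.range (f.domRestrict M) := by
      rw [LinearMap.range_domRestrict, Set.image_comp, ← map_span]
      exact map_mono le_sup_right
    calc S.card = finrank K (span K ((f ∘ w) '' S)) := by
          rw [Set.image_eq_range, finrank_span_eq_card hS]; simp
      _ ≤ _ := finrank_mono hspan
  have hker : finrank K L ≤ finrank K (LinearMap.ker (f.domRestrict M)) := by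
    rw [← (comapSubtypeEquivOfLe (le_sup_left : L ≤ M)).finrank_eq]
    exact finrank_mono fun x hx => by simpa using hL hx
  have := (f.domRestrict M).finrank_range_add_finrank_ker
  omega

end LinearAlgebra

namespace PointedCone

section Module

variable {ι E F : Type*} [AddCommGroup E] [Module ℝ E]

theorem mem_lineal_of_add_mem_lineal {C : PointedCone ℝ E} {a b : E} (ha : a ∈ C) (hb : b ∈ C)
    (hab : a + b ∈ C.lineal) : a ∈ C.lineal := by
  refine mem_lineal.mpr ⟨ha, ?_⟩
  have : -a = b + -(a + b) := by abel
  rw [this]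
  exact C.add_mem hb (mem_lineal.mp hab).2

theorem sup_span_le_lineal [DecidableEq ι] {C : PointedCone ℝ E} {L : Submodule ℝ E}
    (hL : L ≤ C.lineal) {y : E} (hy : y ∈ C) {S : Finset ι} {w : ι → E} {c : ι → ℝ}
    (hw : ∀ j ∈ S, w j ∈ C ∧ 0 < c j) (hsum : y + ∑ j ∈ S, c j • w j ∈ L) :
    L ⊔ span ℝ (w '' S) ≤ C.lineal := by
  have hcw : ∀ j ∈ S, c j • w j ∈ C := fun j hj => C.smul_mem (hw j hj).2.le (hw j hj).1
  refine sup_le hL (span_le.mpr ?_)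
  rintro _ ⟨k, hk, rfl⟩
  have hrest : y + ∑ j ∈ S.erase k, c j • w j ∈ C :=
    C.add_mem hy (C.sum_mem fun j hj => hcw j (Finset.mem_of_mem_erase hj))
  have hck : c k • w k ∈ C.lineal := by
    refine mem_lineal_of_add_mem_lineal (hcw k hk) hrest ?_
    convert hL hsum using 1
    rw [← Finset.add_sum_erase S _ hk]
    abel
  exact (Submodule.smul_mem_iff _ (hw k hk).2.ne').mp hck

theorem hull_image_eq_top [AddCommGroup F] [Module ℝ F] {f : E →ₗ[ℝ] F}
    (hf : Function.Surjective f) {A : Set E} (hA : hull ℝ A = ⊤) : hull ℝ (f '' A) = ⊤ := by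
  refine eq_top_iff.mpr fun v _ => ?_
  obtain ⟨x, rfl⟩ := hf v
  have hx : x ∈ hull ℝ A := by rw [hA]; trivial
  simpa [map_span] using mem_map_of_mem (f := f.restrictScalars {c : ℝ // 0 ≤ c}) hx

theorem exists_notMem_of_hull_eq_top {A : Set E} (hA : hull ℝ A = ⊤) {L : Submodule ℝ E}
    (hL : L ≠ ⊤) : ∃ a ∈ A, a ∉ L := by
  by_contra! h
  refine hL (eq_top_iff.mpr fun v _ => ?_)
  have hv : v ∈ hull ℝ A := by rw [hA]; trivial
  exact span_le.mpr h (hull_le_span ℝ A hv)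

theorem exists_finite_subset_hull_eq_top [FiniteDimensional ℝ E] {A : Set E}
    (hA : hull ℝ A = ⊤) : ∃ B ⊆ A, B.Finite ∧ hull ℝ B = ⊤ := by
  classical
  have hfin (v : E) : ∃ T : Finset E, ↑T ⊆ A ∧ v ∈ hull ℝ (T : Set E) := by
    have hv : v ∈ hull ℝ A := by rw [hA]; trivial
    exact mem_span_finite_of_mem_span hv
  choose T hTA hvT using hfin
  let b := finBasis ℝ E
  let B : Finset E := Finset.univ.biUnion fun k => T (b k) ∪ T (-b k)
  have hTB (k) : T (b k) ⊆ B ∧ T (-b k) ⊆ B :=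
    Finset.union_subset_iff.mp
      (Finset.subset_biUnion_of_mem (fun k => T (b k) ∪ T (-b k)) (Finset.mem_univ k))
  refine ⟨B, ?_, B.finite_toSet, eq_top_iff.mpr fun v _ => ?_⟩
  · intro a ha
    simp only [B, Finset.coe_biUnion, Finset.coe_union, Set.mem_iUnion] at ha
    obtain ⟨k, -, ha | ha⟩ := ha <;> exact hTA _ ha
  · have hspan : span ℝ (Set.range b) ≤ (hull ℝ (B : Set E)).lineal := by
      refine span_le.mpr ?_
      rintro _ ⟨k, rfl⟩
      exact mem_lineal.mpr ⟨span_mono (Finset.coe_subset.mpr (hTB k).1) (hvT _),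
        span_mono (Finset.coe_subset.mpr (hTB k).2) (hvT _)⟩
    rw [b.span_eq] at hspan
    exact lineal_le _ (hspan mem_top)

theorem exists_pos_sum_eq_of_mem_hull {z : ι → E} {S : Finset ι} {v : E}
    (hv : v ∈ hull ℝ (z '' S)) :
    ∃ T ⊆ S, ∃ c : ι → ℝ, (∀ j ∈ T, 0 < c j) ∧ ∑ j ∈ T, c j • z j = v := by
  classical
  obtain ⟨c, rfl⟩ := mem_span_image_finset_iff_exists_fun _ |>.mp hv
  let c' : ι → ℝ := fun j => if h : j ∈ S then c ⟨j, h⟩ else 0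
  refine ⟨S.filter (c' · ≠ 0), Finset.filter_subset _ _, c', fun j hj => ?_, ?_⟩
  · obtain ⟨hjS, hj0⟩ := Finset.mem_filter.mp hj
    refine lt_of_le_of_ne ?_ (Ne.symm hj0)
    simp only [c', dif_pos hjS]
    exact (c _).2
  · rw [Finset.sum_filter_of_ne fun j _ h => left_ne_zero_of_smul h, ← Finset.sum_coe_sort S]
    refine Finset.sum_congr rfl fun j _ => ?_
    simp only [c', dif_pos j.2]
    rfl

end Module

end PointedCone

section NormedSpace

variable {ι E : Type*} [NormedAddCommGroup E] [NormedSpace ℝ E]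

theorem two_le_card_of_add_sum_eq_zero {x : E} (hx : ‖x‖ = 1) {S : Finset ι} {w : ι → E} {c : ι → ℝ}
    (hw : ∀ j ∈ S, ‖w j‖ = 1 ∧ w j ≠ -x ∧ 0 < c j) (hsum : x + ∑ j ∈ S, c j • w j = 0) :
    2 ≤ S.card := by
  by_contra! hS
  rcases Nat.lt_succ_iff.mp hS |>.lt_or_eq with h0 | h1
  · rw [Nat.lt_one_iff, Finset.card_eq_zero] at h0
    subst h0
    simp_all
  · obtain ⟨j, rfl⟩ := Finset.card_eq_one.mp h1
    obtain ⟨hwj, hwx, hc⟩ := hw j (Finset.mem_singleton_self j)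
    rw [Finset.sum_singleton, add_eq_zero_iff_eq_neg'] at hsum
    have hc1 : c j = 1 := by
      simpa [norm_smul, hwj, hx, abs_of_pos hc] using congrArg norm hsum
    exact hwx (by simpa [hc1] using hsum)

theorem PointedCone.isClosed_hull_image {z : ι → E} {S : Finset ι} (hz : LinearIndepOn ℝ z S) :
    IsClosed (hull ℝ (z '' S) : Set E) := by
  let f := Fintype.linearCombination ℝ (fun j : S => z j)
  have hf : Topology.IsClosedEmbedding f := LinearMap.isClosedEmbedding_of_injective
    (LinearMap.ker_eq_bot.mpr (linearIndependent_iff_injective_fintypeLinearCombination.mp hz))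
  have : (hull ℝ (z '' S) : Set E) = f '' Set.Ici 0 := by
    ext x
    simp only [SetLike.mem_coe, mem_span_image_finset_iff_exists_fun, Set.mem_image, Set.mem_Ici]
    constructor
    · rintro ⟨c, rfl⟩
      exact ⟨fun j => c j, fun j => (c j).2, by simp [f, Fintype.linearCombination_apply]⟩
    · rintro ⟨c, hc, rfl⟩
      exact ⟨fun j => ⟨c j, hc j⟩, by simp [f, Fintype.linearCombination_apply]⟩
  rw [this]
  exact hf.isClosedMap _ isClosed_Ici

end NormedSpace

section InnerProductSpace

variable {ι E : Type*} [NormedAddCommGroup E] [InnerProductSpace ℝ E]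

theorem inner_sub_nonpos_of_dist_le_infDist {K : Set E} (hK : Convex ℝ K) {v p : E} (hp : p ∈ K)
    (hmin : dist v p ≤ Metric.infDist v K) {w : E} (hw : w ∈ K) : ⟪v - p, w - p⟫ ≤ 0 := by
  refine (norm_eq_iInf_iff_real_inner_le_zero hK hp).mp ?_ w hw
  have hinf : Metric.infDist v K = ⨅ w : K, ‖v - w‖ := by
    simp only [Metric.infDist_eq_iInf, dist_eq_norm]
  rw [← hinf, ← dist_eq_norm]
  exact le_antisymm hmin (Metric.infDist_le_dist_of_mem hp)

theorem span_image_le_orthogonal {u : E} {z : ι → E} {N : Set ι} (hN : ∀ j ∈ N, ⟪u, z j⟫ = 0) :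
    span ℝ (z '' N) ≤ (ℝ ∙ u)ᗮ :=
  span_le.mpr <| by
    rintro _ ⟨j, hj, rfl⟩
    exact mem_orthogonal_singleton_iff_inner_right.mpr (hN j hj)

theorem card_lt_finrank_of_inner_eq_zero [FiniteDimensional ℝ E] {z : ι → E} {N : Finset ι}
    (hz : LinearIndepOn ℝ z N) {u : E} (hu : u ≠ 0) (hN : ∀ j ∈ N, ⟪u, z j⟫ = 0) :
    N.card < finrank ℝ E := by
  have hne : (ℝ ∙ u)ᗮ ≠ ⊤ := fun h => hu <| inner_self_eq_zero.mp <|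
    mem_orthogonal_singleton_iff_inner_right.mp (h ▸ mem_top : u ∈ (ℝ ∙ u)ᗮ)
  calc N.card = finrank ℝ (span ℝ (z '' N)) := by
        rw [Set.image_eq_range, finrank_span_eq_card hz]; simp
    _ ≤ finrank ℝ (ℝ ∙ u)ᗮ := finrank_mono (span_image_le_orthogonal hN)
    _ < finrank ℝ E := finrank_lt hne

namespace PointedCone

theorem exists_inner_pos_of_hull_eq_top {A : Set E} (hA : hull ℝ A = ⊤) {u : E} (hu : u ≠ 0) :
    ∃ a ∈ A, 0 < ⟪u, a⟫ := by
  by_contra! h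
  have hdual : -u ∈ dual (innerₗ E) A := fun a ha => by simpa [real_inner_comm] using h a ha
  rw [← dual_hull, hA] at hdual
  have := hdual (mem_top (x := u))
  simp only [innerₗ_apply_apply, inner_neg_right, real_inner_self_eq_norm_sq] at this
  exact hu (norm_eq_zero.mp (by nlinarith [norm_nonneg u]))

theorem mem_hull_of_inner_eq_zero {u p : E} {z : ι → E} {S : Set ι}
    (hS : ∀ j ∈ S, ⟪u, z j⟫ ≤ 0) (hp : p ∈ hull ℝ (z '' S)) (hpu : ⟪u, p⟫ = 0) :
    p ∈ hull ℝ (z '' {j ∈ S | ⟪u, z j⟫ = 0}) := by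
  refine (span_induction (p := fun x _ => ⟪u, x⟫ ≤ 0 ∧ (⟪u, x⟫ = 0 →
    x ∈ hull ℝ (z '' {j ∈ S | ⟪u, z j⟫ = 0}))) ?_ ?_ ?_ ?_ hp).2 hpu
  · rintro _ ⟨j, hj, rfl⟩
    exact ⟨hS j hj, fun h => subset_hull ⟨j, ⟨hj, h⟩, rfl⟩⟩
  · simp
  · rintro x y - - ⟨hx, hx'⟩ ⟨hy, hy'⟩
    rw [inner_add_right]
    exact ⟨by linarith, fun h => add_mem (hx' (by linarith)) (hy' (by linarith))⟩
  · rintro ⟨r, hr⟩ x - ⟨hx, hx'⟩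
    have hsmul : ⟪u, (⟨r, hr⟩ : {c : ℝ // 0 ≤ c}) • x⟫ = r * ⟪u, x⟫ := real_inner_smul_right u x r
    rw [hsmul]
    refine ⟨mul_nonpos_of_nonneg_of_nonpos hr hx, fun h => ?_⟩
    rcases mul_eq_zero.mp h with rfl | h
    · simp
    · exact Submodule.smul_mem _ _ (hx' h)

theorem mem_hull_inner_eq_zero_of_dist_le_infDist {v p : E} {z : ι → E} {S : Set ι}
    (hp : p ∈ hull ℝ (z '' S)) (hmin : dist v p ≤ Metric.infDist v (hull ℝ (z '' S) : Set E)) :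
    p ∈ hull ℝ (z '' {j ∈ S | ⟪v - p, z j⟫ = 0}) := by
  have hobtuse : ∀ w ∈ hull ℝ (z '' S), ⟪v - p, w - p⟫ ≤ 0 := fun w hw =>
    inner_sub_nonpos_of_dist_le_infDist (convex _) hp hmin hw
  have hp0 : ⟪v - p, p⟫ = 0 := by
    have h0 := hobtuse 0 (zero_mem _)
    have h2 := hobtuse (p + p) (add_mem hp hp)
    rw [zero_sub, inner_neg_right] at h0
    rw [add_sub_cancel_right] at h2
    linarith
  refine mem_hull_of_inner_eq_zero (fun j hj => ?_) hp hp0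
  simpa using hobtuse (p + z j) (add_mem hp (subset_hull ⟨j, hj, rfl⟩))

theorem exists_update_linearIndepOn_inner_pos [FiniteDimensional ℝ E] [DecidableEq ι]
    {A : ι → Set E} {Q : Finset ι} (hA : ∀ j ∈ Q, hull ℝ (A j) = ⊤) (hQ : finrank ℝ E ≤ Q.card)
    {N : Finset ι} (hNQ : N ⊆ Q) {z : ι → E} (hzA : ∀ j ∈ N, z j ∈ A j)
    (hz : LinearIndepOn ℝ z N) {u : E} (hu : u ≠ 0) (hN : ∀ j ∈ N, ⟪u, z j⟫ = 0) :
    ∃ k ∉ N, ∃ a, 0 < ⟪u, a⟫ ∧ insert k N ⊆ Q ∧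
      (∀ j ∈ insert k N, Function.update z k a j ∈ A j) ∧
      LinearIndepOn ℝ (Function.update z k a) ↑(insert k N) := by
  obtain ⟨k, hkQ, hkN⟩ := Finset.exists_mem_notMem_of_card_lt_card
    ((card_lt_finrank_of_inner_eq_zero hz hu hN).trans_le hQ)
  obtain ⟨a, haA, hua⟩ := exists_inner_pos_of_hull_eq_top (hA k hkQ) hu
  have hupdate : Set.EqOn (Function.update z k a) z N := fun j hj =>
    Function.update_of_ne (ne_of_mem_of_not_mem hj hkN) a z
  refine ⟨k, hkN, a, hua, Finset.insert_subset hkQ hNQ, fun j hj => ?_, ?_⟩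
  · rcases Finset.mem_insert.mp hj with rfl | hj
    · simpa using haA
    · rw [hupdate hj]
      exact hzA j hj
  rw [Finset.coe_insert, linearIndepOn_insert (by simpa using hkN), Set.image_congr hupdate,
    Function.update_self]
  exact ⟨hz.congr hupdate.symm, fun ha => hua.ne'
    (mem_orthogonal_singleton_iff_inner_right.mp (span_image_le_orthogonal hN ha))⟩

/-- Conic colorful Carathéodory theorem. -/
theorem exists_colorful_pos_sum_eq [FiniteDimensional ℝ E] {A : ι → Set E}
    {Q : Finset ι} (hA : ∀ j ∈ Q, hull ℝ (A j) = ⊤) (hQ : finrank ℝ E ≤ Q.card) (v : E) :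
    ∃ S ⊆ Q, ∃ z : ι → E, ∃ c : ι → ℝ, (∀ j ∈ S, z j ∈ A j ∧ 0 < c j) ∧
      LinearIndepOn ℝ z S ∧ ∑ j ∈ S, c j • z j = v := by
  classical
  choose! B hBA hBfin hB using fun j (hj : j ∈ Q) => exists_finite_subset_hull_eq_top (hA j hj)
  -- Among independent rainbow families from the finite sets `B j`, take one whose cone is
  -- closest to `v`.
  let rainbow : Set (Finset ι × (ι → E)) :=
    {P | P.1 ⊆ Q ∧ (∀ j ∈ P.1, P.2 j ∈ B j) ∧ LinearIndepOn ℝ P.2 P.1}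
  let φ (P : Finset ι × (ι → E)) : ℝ := Metric.infDist v (hull ℝ (P.2 '' P.1) : Set E)
  have hφ : (φ '' rainbow).Finite := by
    refine (((Q.finite_toSet.biUnion hBfin).finite_subsets).image
      fun T => Metric.infDist v (hull ℝ T : Set E)).subset ?_
    rintro _ ⟨⟨S, z⟩, ⟨hSQ, hzB, -⟩, rfl⟩
    refine ⟨z '' S, ?_, rfl⟩
    rintro _ ⟨j, hj, rfl⟩
    exact Set.mem_biUnion (hSQ hj) (hzB j hj)
  obtain ⟨⟨S, z⟩, ⟨hSQ, hzB, hz⟩, hmin⟩ :=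
    Set.Finite.exists_minimalFor' φ rainbow hφ ⟨(∅, 0), by simp [rainbow]⟩
  obtain ⟨p, hp, hpdist⟩ := (isClosed_hull_image hz).exists_infDist_eq_dist ⟨0, zero_mem _⟩ v
  by_cases hvp : v = p
  · subst hvp
    obtain ⟨T, hTS, c, hc, hsum⟩ := exists_pos_sum_eq_of_mem_hull hp
    exact ⟨T, hTS.trans hSQ, z, c, fun j hj => ⟨hBA j (hSQ (hTS hj)) (hzB j (hTS hj)), hc j hj⟩,
      hz.mono hTS, hsum⟩
  exfalso
  set u := v - p
  -- `p` lies in the cone of the face `N ⊆ u⊥`, which leaves a color `k` free to move towards `v`.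
  set N := S.filter (fun j => ⟪u, z j⟫ = 0)
  have hpN : p ∈ hull ℝ (z '' N) := by
    rw [Finset.coe_filter]
    exact mem_hull_inner_eq_zero_of_dist_le_infDist hp hpdist.ge
  obtain ⟨k, hkN, a, hua, hkNQ, hz'B, hz'⟩ := exists_update_linearIndepOn_inner_pos hB hQ
    ((Finset.filter_subset _ _).trans hSQ) (fun j hj => hzB j (Finset.mem_of_mem_filter j hj))
    (hz.mono (Finset.coe_subset.mpr (Finset.filter_subset _ _))) (sub_ne_zero.mpr hvp)
    (fun j hj => (Finset.mem_filter.mp hj).2)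
  set z' := Function.update z k a
  have hp' : p ∈ hull ℝ (z' '' ↑(insert k N)) := by
    refine span_mono ?_ hpN
    rw [← Set.image_congr fun j hj => Function.update_of_ne (ne_of_mem_of_not_mem hj hkN) a z]
    exact Set.image_mono (Finset.coe_subset.mpr (Finset.subset_insert k N))
  have hφS : φ (S, z) = dist v p := hpdist
  have hclosest : dist v p ≤ φ (insert k N, z') := by
    rw [← hφS]
    exact hmin (show (insert k N, z') ∈ rainbow from ⟨hkNQ, hz'B, hz'⟩)
      (hφS ▸ Metric.infDist_le_dist_of_mem hp')
  have := inner_sub_nonpos_of_dist_le_infDist (convex _) hp' hclosest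
    (add_mem hp' (subset_hull ⟨k, Finset.mem_insert_self k N, Function.update_self k a z⟩))
  rw [add_sub_cancel_left] at this
  linarith

theorem exists_colorful_add_pos_sum_mem [FiniteDimensional ℝ E] (L : Submodule ℝ E)
    {A : ι → Set E} {Q : Finset ι} (hA : ∀ j ∈ Q, hull ℝ (A j) = ⊤) (hQ : finrank ℝ Lᗮ ≤ Q.card)
    (y : E) :
    ∃ S ⊆ Q, ∃ w : ι → E, ∃ c : ι → ℝ, (∀ j ∈ S, w j ∈ A j ∧ 0 < c j) ∧
      y + ∑ j ∈ S, c j • w j ∈ L ∧ finrank ℝ L + S.card ≤ finrank ℝ ↥(L ⊔ span ℝ (w '' S)) := by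
  let π : E →ₗ[ℝ] Lᗮ := Lᗮ.orthogonalProjectionOnto
  have hker (x : E) : π x = 0 ↔ x ∈ L := by
    simp [π, orthogonalProjectionOnto_eq_zero_iff, orthogonal_orthogonal]
  have hπ : Function.Surjective π := fun x => ⟨x, orthogonalProjectionOnto_mem_subspace_eq_self x⟩
  obtain ⟨S, hSQ, z, c, hzc, hz, hsum⟩ :=
    exists_colorful_pos_sum_eq (fun j hj => hull_image_eq_top hπ (hA j hj)) hQ (-π y)
  choose! w hwA hwz using fun j hj => (hzc j hj).1
  have hπw : Set.EqOn (π ∘ w) z S := fun j hj => hwz j hj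
  refine ⟨S, hSQ, w, c, fun j hj => ⟨hwA j hj, (hzc j hj).2⟩, (hker _).mp ?_,
    finrank_add_card_le_finrank_sup π (fun x hx => (hker x).mpr hx) (hz.congr hπw.symm)⟩
  rw [map_add, map_sum, ← neg_neg (π y), ← hsum, neg_add_eq_zero]
  exact Finset.sum_congr rfl fun j hj => by rw [map_smul, ← hπw hj]; rfl

end PointedCone

end InnerProductSpace

section Transversal

variable {ι E : Type*} [DecidableEq ι]

theorem exists_transversal_extension [AddCommGroup E] [Module ℝ E] {X : ι → Set E}
    {I : Finset ι} {t : ι → E} (ht : ∀ j ∈ I, t j ∈ X j) {L : Submodule ℝ E}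
    (hL : L ≤ (hull ℝ (t '' I)).lineal) {l : ι} (hl : l ∉ I) {y : E} (hy : y ∈ X l)
    {S : Finset ι} (hS : Disjoint S (insert l I)) {w : ι → E} {c : ι → ℝ}
    (hw : ∀ j ∈ S, w j ∈ X j ∧ 0 < c j) (hsum : y + ∑ j ∈ S, c j • w j ∈ L) :
    ∃ t' : ι → E, (∀ j ∈ insert l (I ∪ S), t' j ∈ X j) ∧
      L ⊔ span ℝ (w '' S) ≤ (hull ℝ (t' '' ↑(insert l (I ∪ S)))).lineal := by
  let t' j := if j ∈ I then t j else if j = l then y else w j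
  have hSI : ∀ j ∈ S, j ∉ I ∧ j ≠ l := fun j hj => by
    have := Finset.disjoint_left.mp hS hj
    simp_all
  have ht'l : t' l = y := by simp [t', hl]
  have ht'S : ∀ j ∈ S, t' j = w j := fun j hj => by simp [t', hSI j hj]
  refine ⟨t', fun j hj => ?_, ?_⟩
  · rcases Finset.mem_insert.mp hj with rfl | hj
    · rwa [ht'l]
    rcases Finset.mem_union.mp hj with hj | hj
    · simpa [t', hj] using ht j hj
    · rw [ht'S j hj]
      exact (hw j hj).1
  · set C := hull ℝ (t' '' ↑(insert l (I ∪ S)))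
    have hmem : ∀ j ∈ insert l (I ∪ S), t' j ∈ C := fun j hj => subset_hull ⟨j, hj, rfl⟩
    have hle : hull ℝ (t '' I) ≤ C := span_mono <| by
      rintro _ ⟨j, hj, rfl⟩
      rw [Finset.mem_coe] at hj
      exact ⟨j, by simp [hj], by simp [t', hj]⟩
    refine sup_span_le_lineal (hL.trans (gc_ofSubmodule_lineal.monotone_u hle))
      (ht'l ▸ hmem l (Finset.mem_insert_self _ _)) (fun j hj => ⟨?_, (hw j hj).2⟩) hsum
    rw [← ht'S j hj]
    exact hmem j (by simp [hj])

variable [NormedAddCommGroup E] [InnerProductSpace ℝ E] [FiniteDimensional ℝ E]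

theorem exists_transversal_hull_eq_top [Fintype ι] {X : ι → Set E}
    (hX : ∀ j, hull ℝ (X j) = ⊤) (hcard : 2 * finrank ℝ E ≤ Fintype.card ι) (I : Finset ι)
    (t : ι → E) (ht : ∀ j ∈ I, t j ∈ X j) (L : Submodule ℝ E)
    (hL : L ≤ (hull ℝ (t '' I)).lineal) (hI : I.card + 1 ≤ 2 * finrank ℝ L) :
    ∃ I' : Finset ι, I' ≠ Finset.univ ∧ ∃ t' : ι → E, (∀ j ∈ I', t' j ∈ X j) ∧
      hull ℝ (t' '' I') = ⊤ := by
  have hLE := L.finrank_le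
  have hIuniv : I ≠ Finset.univ := fun h => by
    rw [h, Finset.card_univ] at hI
    omega
  by_cases hLtop : L = ⊤
  · exact ⟨I, hIuniv, t, ht, eq_top_iff.mpr fun v _ => lineal_le _ (hL (hLtop ▸ mem_top))⟩
  have hLlt := finrank_lt hLtop
  obtain ⟨l, hl⟩ : ∃ l, l ∉ I := by
    by_contra! h
    exact hIuniv (Finset.eq_univ_iff_forall.mpr h)
  obtain ⟨y, hy, hyL⟩ := exists_notMem_of_hull_eq_top (hX l) hLtop
  have hQ : finrank ℝ Lᗮ ≤ (insert l I)ᶜ.card := by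
    have := L.finrank_add_finrank_orthogonal
    rw [Finset.card_compl, Finset.card_insert_of_notMem hl]
    omega
  obtain ⟨S, hSQ, w, c, hw, hsum, hrank⟩ :=
    exists_colorful_add_pos_sum_mem L (fun j _ => hX j) hQ y
  have hS : S.Nonempty := by
    rw [Finset.nonempty_iff_ne_empty]
    rintro rfl
    exact hyL (by simpa using hsum)
  obtain ⟨t', ht', hL'⟩ := exists_transversal_extension ht hL hl hy
    (Finset.subset_compl_iff_disjoint_right.mp hSQ) hw hsum
  have hI' : (insert l (I ∪ S)).card ≤ I.card + S.card + 1 :=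
    (Finset.card_insert_le _ _).trans (by have := Finset.card_union_le I S; omega)
  have := hS.card_pos
  exact exists_transversal_hull_eq_top hX hcard _ t' ht' _ hL' (by omega)
termination_by finrank ℝ E - finrank ℝ L
decreasing_by
  have := finrank_le (L ⊔ span ℝ (w '' ↑S))
  omega

theorem exists_transversal_hull_eq_top_of_finrank_le [Fintype ι] {X : ι → Set E}
    (hX : ∀ j, hull ℝ (X j) = ⊤) (hunit : ∀ j, ∀ v ∈ X j, ‖v‖ = 1)
    (hcard : 2 * finrank ℝ E ≤ Fintype.card ι) {i : ι} {x : E} (hx : x ∈ X i) {J : Finset ι}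
    (hiJ : i ∉ J) (hJx : ∀ j ∈ J, -x ∉ X j) (hJ : finrank ℝ E ≤ J.card) :
    ∃ I : Finset ι, I ≠ Finset.univ ∧ ∃ t : ι → E, (∀ j ∈ I, t j ∈ X j) ∧
      hull ℝ (t '' I) = ⊤ := by
  obtain ⟨S, hSJ, w, c, hw, hsum, hrank⟩ := exists_colorful_add_pos_sum_mem ⊥
    (fun j _ => hX j) (by rwa [bot_orthogonal_eq_top, finrank_top]) x
  have hS2 : 2 ≤ S.card := two_le_card_of_add_sum_eq_zero (hunit i x hx)
    (fun j hj => ⟨hunit j _ (hw j hj).1, fun h => hJx j (hSJ hj) (h ▸ (hw j hj).1), (hw j hj).2⟩)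
    ((mem_bot ℝ).mp hsum)
  have hSi : Disjoint S (insert i ∅) := by
    simpa using fun h => hiJ (hSJ h)
  obtain ⟨t, ht, hL⟩ := exists_transversal_extension (t := 0) (by simp) bot_le
    (Finset.notMem_empty i) hx hSi hw hsum
  have hcard' : (insert i (∅ ∪ S)).card ≤ S.card + 1 := by simpa using Finset.card_insert_le i S
  exact exists_transversal_hull_eq_top hX hcard _ t ht _ hL
    (by simp only [finrank_bot, zero_add] at hrank; omega)

end Transversal

theorem le_card_filter_not_of_ncard_lt {α : Type*} [Fintype α] [DecidableEq α] {P : α → Prop}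
    [DecidablePred P] {i : α} {d : ℕ} (hα : Fintype.card α = 2 * d)
    (h : {j | j ≠ i ∧ P j}.ncard < d) : d ≤ ((Finset.univ.erase i).filter (¬ P ·)).card := by
  have hset : {j | j ≠ i ∧ P j} = ↑((Finset.univ.erase i).filter P) := by
    ext j
    simp
  rw [hset, Set.ncard_coe_finset] at h
  have := Finset.card_filter_add_card_filter_not (s := Finset.univ.erase i) P
  rw [Finset.card_erase_of_mem (Finset.mem_univ i), Finset.card_univ, hα] at this
  omega

theorem posHull_eq_hull {d : ℕ} (A : Set (EuclideanSpace ℝ (Fin d))) :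
    posHull A = (hull ℝ A : Set (EuclideanSpace ℝ (Fin d))) := by
  ext x
  constructor
  · rintro ⟨n, c, f, hc, hf, rfl⟩
    exact sum_mem fun i _ => (hull ℝ A).smul_mem (hc i) (subset_hull (hf i))
  · intro hx
    obtain ⟨n, c, f, rfl⟩ := mem_span_set'.mp hx
    exact ⟨n, fun i => c i, fun i => f i, fun i => (c i).2, fun i => (f i).2, rfl⟩

theorem antipodal_lemma (d : ℕ) (X : Fin (2 * d) → Set (EuclideanSpace ℝ (Fin d)))
    (hXs : ∀ i, X i ⊆ Metric.sphere (0 : EuclideanSpace ℝ (Fin d)) 1)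
    (hX : ∀ i, posHull (X i) = Set.univ)
    (hno : ∀ I : Finset (Fin (2 * d)), I ≠ Finset.univ →
      ∀ x : Fin (2 * d) → EuclideanSpace ℝ (Fin d),
        (∀ i ∈ I, x i ∈ X i) → posHull (x '' ↑I) ≠ Set.univ) :
    ∀ i : Fin (2 * d), ∀ x ∈ X i,
      d ≤ {j : Fin (2 * d) | j ≠ i ∧ -x ∈ X j}.ncard := by
  classical
  intro i x hx
  by_contra! hfew
  have hdim : finrank ℝ (EuclideanSpace ℝ (Fin d)) = d := finrank_euclideanSpace_fin
  have hXtop (j) : hull ℝ (X j) = ⊤ := eq_top_iff.mpr fun v _ => by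
    have hv : v ∈ posHull (X j) := by rw [hX j]; trivial
    rwa [posHull_eq_hull] at hv
  obtain ⟨I, hI, t, ht, htop⟩ := exists_transversal_hull_eq_top_of_finrank_le hXtop
    (fun j v hv => by simpa using hXs j hv) (by simp [hdim]) hx
    (J := (Finset.univ.erase i).filter (fun j => -x ∉ X j)) (by simp) (fun j hj => by simp_all)
    (hdim.trans_le (le_card_filter_not_of_ncard_lt (Fintype.card_fin _) hfew))
  exact hno I hI t ht (by rw [posHull_eq_hull, htop]; rfl)
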